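/- Let 0 < α < 1, assume the SICA parameters are positive and the incidence function f satisfies (H1)–(H3). Let (S,I,C,A) be a solution of the fractional SICA system on [0,∞) with S, I, C, A nonnegative. Then the total population N(t) = S(t) + I(t) + C(t) + A(t) satisfies ᶜD^α N(t) ≤ Λ − μN(t) for all t > 0, and consequently N(t) ≤ N(0) + Λ/μ for all t ≥ 0. -/

import Mathlib

/-- The Caputo fractional derivative of order `α` (0 < α < 1) based at `0`:
`ᶜD^α φ(t) = (1/Γ(1−α)) ∫₀ᵗ φ′(x)(t−x)^{−α} dx`. -/
noncomputable def caputo (α : ℝ) (φ : ℝ → ℝ) (t : ℝ) : ℝ :=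
  (1 / Real.Gamma (1 - α)) * ∫ x in (0:ℝ)..t, deriv φ x * (t - x) ^ (-α)

/-!
For `t > 0` the Caputo derivative of `N = S + I + C + A` is the sum of the four right-hand
sides, which telescopes to `Λ - μ N - d A ≤ Λ - μ N`.

For the bound, take a maximum point `t₀` of `N` on `[0, t]`. If `t₀ > 0`, integrating by parts
in the Caputo integral (the kernel `(t₀ - x) ^ (-α)` increases while `N ≤ N t₀`) shows
`ᶜD^α N(t₀) ≥ 0`, hence `μ N(t₀) ≤ Λ`. So `N t ≤ N t₀ ≤ max (N 0) (Λ / μ) ≤ N 0 + Λ / μ`.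
-/

open Set Filter Topology MeasureTheory

section Caputo

variable {α t : ℝ} {g h : ℝ → ℝ}

lemma derivWithin_Ici_eq_deriv {x : ℝ} (hx : 0 < x) : derivWithin g (Ici 0) x = deriv g x :=
  derivWithin_of_mem_nhds (Ici_mem_nhds hx)

lemma ContDiffOn.hasDerivAt_of_pos (hg : ContDiffOn ℝ 1 g (Ici 0)) {x : ℝ} (hx : 0 < x) :
    HasDerivAt g (deriv g x) x :=
  ((hg.differentiableOn one_ne_zero).differentiableAt (Ici_mem_nhds hx)).hasDerivAt

/-- `deriv g` may be junk at `0`, but it agrees a.e. with the continuous `derivWithin g (Ici 0)`. -/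
lemma ContDiffOn.intervalIntegrable_deriv_mul (hg : ContDiffOn ℝ 1 g (Ici 0)) (ht : 0 ≤ t)
    {w : ℝ → ℝ} (hw : IntervalIntegrable w volume 0 t) :
    IntervalIntegrable (fun x => deriv g x * w x) volume 0 t := by
  have hcont : ContinuousOn (derivWithin g (Ici 0)) (uIcc 0 t) :=
    (hg.continuousOn_derivWithin (uniqueDiffOn_Ici 0) le_rfl).mono
      (by rw [uIcc_of_le ht]; exact Icc_subset_Ici_self)
  have hprod := hw.continuousOn_mul hcont
  rw [intervalIntegrable_iff] at hprod ⊢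
  refine hprod.congr_fun (fun x hx => ?_) measurableSet_uIoc
  rw [uIoc_of_le ht] at hx
  simp only [derivWithin_Ici_eq_deriv hx.1]

lemma intervalIntegrable_sub_rpow_neg (hα : α < 1) (t a b : ℝ) :
    IntervalIntegrable (fun x => (t - x) ^ (-α)) volume a b := by
  simpa using (intervalIntegral.intervalIntegrable_rpow' (r := -α) (by linarith)
    (a := t - a) (b := t - b)).comp_sub_left t

lemma ContDiffOn.intervalIntegrable_deriv_mul_rpow (hα : α < 1) (hg : ContDiffOn ℝ 1 g (Ici 0))
    (ht : 0 ≤ t) : IntervalIntegrable (fun x => deriv g x * (t - x) ^ (-α)) volume 0 t :=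
  hg.intervalIntegrable_deriv_mul ht (intervalIntegrable_sub_rpow_neg hα t 0 t)

lemma caputo_add (hα : α < 1) (hg : ContDiffOn ℝ 1 g (Ici 0)) (hh : ContDiffOn ℝ 1 h (Ici 0))
    (ht : 0 < t) : caputo α (fun τ => g τ + h τ) t = caputo α g t + caputo α h t := by
  unfold caputo
  rw [← mul_add, ← intervalIntegral.integral_add (hg.intervalIntegrable_deriv_mul_rpow hα ht.le)
    (hh.intervalIntegrable_deriv_mul_rpow hα ht.le)]
  congr 1
  refine intervalIntegral.integral_congr_ae (ae_of_all _ fun x hx => ?_)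
  rw [uIoc_of_le ht.le] at hx
  rw [deriv_fun_add (hg.hasDerivAt_of_pos hx.1).differentiableAt
    (hh.hasDerivAt_of_pos hx.1).differentiableAt, add_mul]

/-- Integrate by parts on `[0, s]`, away from the singularity of the kernel at `t`: the new
integrand `(g x - g t) * α (t - x) ^ (-α - 1)` is `≤ 0` since `g ≤ g t`. -/
lemma sub_mul_rpow_add_le_integral_of_isMaxOn (hα : 0 ≤ α) (hg : ContDiffOn ℝ 1 g (Ici 0))
    (hmax : IsMaxOn g (Icc 0 t) t) {s : ℝ} (hs : s ∈ Ico 0 t) :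
    (g t - g 0) * t ^ (-α) + (g s - g t) * (t - s) ^ (-α)
      ≤ ∫ x in (0:ℝ)..s, deriv g x * (t - x) ^ (-α) := by
  obtain ⟨hs0, hst⟩ := hs
  have hpos : ∀ x ∈ uIcc 0 s, 0 < t - x := fun x hx => by
    rw [uIcc_of_le hs0] at hx; linarith [hx.2]
  have hIoo : ∀ x ∈ Ioo (min 0 s) (max 0 s), 0 < x ∧ 0 < t - x := fun x hx => by
    rw [min_eq_left hs0, max_eq_right hs0] at hx; exact ⟨hx.1, by linarith [hx.2]⟩
  have hibp := intervalIntegral.integral_mul_deriv_eq_deriv_mul_of_hasDerivAt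
    (u := fun x => g x - g t) (v := fun x => (t - x) ^ (-α))
    (v' := fun x => -1 * -α * (t - x) ^ (-α - 1))
    ((hg.continuousOn.mono (by rw [uIcc_of_le hs0]; exact Icc_subset_Ici_self)).sub
      continuousOn_const)
    ((continuousOn_const.sub continuousOn_id).rpow_const fun x hx => Or.inl (hpos x hx).ne')
    (fun x hx => (hg.hasDerivAt_of_pos (hIoo x hx).1).sub_const _)
    (fun x hx => ((hasDerivAt_id x).const_sub t).rpow_const (Or.inl (hIoo x hx).2.ne'))
    (by simpa using hg.intervalIntegrable_deriv_mul hs0 (intervalIntegrable_const (c := (1:ℝ))))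
    (ContinuousOn.intervalIntegrable (continuousOn_const.mul
      ((continuousOn_const.sub continuousOn_id).rpow_const fun x hx => Or.inl (hpos x hx).ne')))
  have hnonpos : ∫ x in (0:ℝ)..s, (g x - g t) * (-1 * -α * (t - x) ^ (-α - 1)) ≤ 0 := by
    have hneg := intervalIntegral.integral_nonneg (μ := volume) hs0
      (f := fun x => -((g x - g t) * (-1 * -α * (t - x) ^ (-α - 1)))) fun x hx => by
        have hgx : g x ≤ g t := hmax ⟨hx.1, hx.2.trans hst.le⟩
        have hxt : 0 ≤ t - x := by linarith [hx.2]
        exact neg_nonneg.mpr (mul_nonpos_of_nonpos_of_nonneg (sub_nonpos.mpr hgx)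
          (by rw [neg_one_mul, neg_neg]; positivity))
    rw [intervalIntegral.integral_neg] at hneg
    linarith
  simp only [sub_zero] at hibp
  linarith

lemma tendsto_sub_mul_rpow_nhdsLT (hα : α < 1) (hg : HasDerivAt g (deriv g t) t) :
    Tendsto (fun s => (g s - g t) * (t - s) ^ (-α)) (𝓝[<] t) (𝓝 0) := by
  have hslope : Tendsto (slope g t) (𝓝[<] t) (𝓝 (deriv g t)) :=
    (hasDerivAt_iff_tendsto_slope.mp hg).mono_left (nhdsWithin_mono _ fun _ hx => ne_of_lt hx)
  have hpow : Tendsto (fun s => (t - s) ^ (1 - α)) (𝓝[<] t) (𝓝 0) := by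
    have h : Tendsto (fun s => (t - s) ^ (1 - α)) (𝓝 t) (𝓝 ((t - t) ^ (1 - α))) :=
      ((continuous_const.sub continuous_id).rpow_const
        fun _ => Or.inr (by linarith)).tendsto t
    rw [sub_self, Real.zero_rpow (by linarith)] at h
    exact h.mono_left nhdsWithin_le_nhds
  have hlim := (hslope.mul hpow).neg
  rw [mul_zero, neg_zero] at hlim
  refine hlim.congr' (eventually_nhdsWithin_of_forall fun s (hs : s < t) => ?_)
  have hst : s - t ≠ 0 := (sub_neg.2 hs).ne
  rw [slope_def_field, show 1 - α = 1 + -α by ring, Real.rpow_add (sub_pos.2 hs), Real.rpow_one]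
  field_simp
  ring

/-- Let `s → t⁻` in the previous lemma: the boundary term is `-slope g t s * (t - s) ^ (1 - α)`,
which tends to `0` because `g` is differentiable at `t` and `α < 1`. -/
lemma sub_mul_rpow_le_integral_of_isMaxOn (hα0 : 0 ≤ α) (hα1 : α < 1)
    (hg : ContDiffOn ℝ 1 g (Ici 0)) (ht : 0 < t) (hmax : IsMaxOn g (Icc 0 t) t) :
    (g t - g 0) * t ^ (-α) ≤ ∫ x in (0:ℝ)..t, deriv g x * (t - x) ^ (-α) := by
  have hIcc : uIcc 0 t ∈ 𝓝[<] t :=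
    mem_of_superset (Ioo_mem_nhdsLT ht) (uIcc_of_le ht.le ▸ Ioo_subset_Icc_self)
  have hprim : Tendsto (fun s => ∫ x in (0:ℝ)..s, deriv g x * (t - x) ^ (-α)) (𝓝[<] t)
      (𝓝 (∫ x in (0:ℝ)..t, deriv g x * (t - x) ^ (-α))) :=
    ((intervalIntegral.continuousOn_primitive_interval'
      (hg.intervalIntegrable_deriv_mul_rpow hα1 ht.le) left_mem_uIcc) t right_mem_uIcc
      |>.mono_of_mem_nhdsWithin hIcc).tendsto
  have hlower := (tendsto_sub_mul_rpow_nhdsLT hα1 (hg.hasDerivAt_of_pos ht)).const_add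
    ((g t - g 0) * t ^ (-α))
  rw [add_zero] at hlower
  exact le_of_tendsto_of_tendsto hlower hprim <| eventually_of_mem (Ioo_mem_nhdsLT ht)
    fun s hs => sub_mul_rpow_add_le_integral_of_isMaxOn hα0 hg hmax ⟨hs.1.le, hs.2⟩

lemma caputo_nonneg_of_isMaxOn (hα0 : 0 ≤ α) (hα1 : α < 1) (hg : ContDiffOn ℝ 1 g (Ici 0))
    (ht : 0 < t) (hmax : IsMaxOn g (Icc 0 t) t) : 0 ≤ caputo α g t := by
  have hΓ : 0 < Real.Gamma (1 - α) := Real.Gamma_pos_of_pos (by linarith)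
  have hg0 : g 0 ≤ g t := hmax ⟨le_rfl, ht.le⟩
  exact mul_nonneg (by positivity) <|
    (mul_nonneg (sub_nonneg.2 hg0) (Real.rpow_nonneg ht.le _)).trans
      (sub_mul_rpow_le_integral_of_isMaxOn hα0 hα1 hg ht hmax)

lemma le_max_of_caputo_le {Λ μ : ℝ} (hα0 : 0 ≤ α) (hα1 : α < 1) (hμ : 0 < μ)
    (hg : ContDiffOn ℝ 1 g (Ici 0)) (hcap : ∀ t, 0 < t → caputo α g t ≤ Λ - μ * g t)
    (ht : 0 ≤ t) : g t ≤ max (g 0) (Λ / μ) := by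
  obtain ⟨t₀, ht₀, hmax⟩ := isCompact_Icc.exists_isMaxOn (nonempty_Icc.2 ht)
    (hg.continuousOn.mono Icc_subset_Ici_self)
  refine (hmax ⟨ht, le_rfl⟩ : g t ≤ g t₀).trans ?_
  rcases ht₀.1.eq_or_lt with h0 | hpos
  · exact h0 ▸ le_max_left _ _
  · have hnonneg := caputo_nonneg_of_isMaxOn hα0 hα1 hg hpos
      (hmax.on_subset (Icc_subset_Icc_right ht₀.2))
    refine le_max_of_le_right ((le_div_iff₀ hμ).2 ?_)
    linarith [hcap t₀ hpos]

end Caputo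

theorem stmt_15_general (α : ℝ) (hα0 : 0 < α) (hα1 : α < 1)
    (Λ μ ρ φ σ ω d ξ₁ ξ₂ ξ₃ : ℝ)
    (hΛ : 0 < Λ) (hμ : 0 < μ)
    (hd : 0 < d)
    (hξ₁ : ξ₁ = ρ + φ + μ) (hξ₂ : ξ₂ = ω + μ) (hξ₃ : ξ₃ = σ + μ + d)
    (f : ℝ → ℝ → ℝ)
    (S I C A : ℝ → ℝ)
    (hS : ContDiffOn ℝ 1 S (Set.Ici 0)) (hI : ContDiffOn ℝ 1 I (Set.Ici 0))
    (hC : ContDiffOn ℝ 1 C (Set.Ici 0)) (hA : ContDiffOn ℝ 1 A (Set.Ici 0))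
    (hSnn : ∀ t : ℝ, 0 ≤ t → 0 ≤ S t) (hInn : ∀ t : ℝ, 0 ≤ t → 0 ≤ I t)
    (hCnn : ∀ t : ℝ, 0 ≤ t → 0 ≤ C t) (hAnn : ∀ t : ℝ, 0 ≤ t → 0 ≤ A t)
    (hsys1 : ∀ t : ℝ, 0 < t →
      caputo α S t = Λ - μ * S t - f (S t) (I t) * I t)
    (hsys2 : ∀ t : ℝ, 0 < t →
      caputo α I t = f (S t) (I t) * I t - ξ₁ * I t + σ * A t + ω * C t)
    (hsys3 : ∀ t : ℝ, 0 < t → caputo α C t = φ * I t - ξ₂ * C t)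
    (hsys4 : ∀ t : ℝ, 0 < t → caputo α A t = ρ * I t - ξ₃ * A t) :
    (∀ t : ℝ, 0 < t →
        caputo α (fun τ => S τ + I τ + C τ + A τ) t
          ≤ Λ - μ * (S t + I t + C t + A t))
    ∧ (∀ t : ℝ, 0 ≤ t →
        S t + I t + C t + A t ≤ (S 0 + I 0 + C 0 + A 0) + Λ / μ) := by
  have hcap : ∀ t : ℝ, 0 < t →
      caputo α (fun τ => S τ + I τ + C τ + A τ) t ≤ Λ - μ * (S t + I t + C t + A t) := by
    intro t ht
    rw [caputo_add hα1 ((hS.add hI).add hC) hA ht, caputo_add hα1 (hS.add hI) hC ht,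
      caputo_add hα1 hS hI ht, hsys1 t ht, hsys2 t ht, hsys3 t ht, hsys4 t ht, hξ₁, hξ₂, hξ₃]
    linarith [mul_nonneg hd.le (hAnn t ht.le)]
  refine ⟨hcap, fun t ht => (le_max_of_caputo_le hα0.le hα1 hμ (((hS.add hI).add hC).add hA)
    hcap ht).trans (max_le_add_of_nonneg ?_ (div_pos hΛ hμ).le)⟩
  linarith [hSnn 0 le_rfl, hInn 0 le_rfl, hCnn 0 le_rfl, hAnn 0 le_rfl]

theorem stmt_15 (α : ℝ) (hα0 : 0 < α) (hα1 : α < 1)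
    (Λ μ ρ φ σ ω d ξ₁ ξ₂ ξ₃ : ℝ)
    (hΛ : 0 < Λ) (hμ : 0 < μ) (hρ : 0 < ρ) (hφ : 0 < φ) (hσ : 0 < σ)
    (hω : 0 < ω) (hd : 0 < d)
    (hξ₁ : ξ₁ = ρ + φ + μ) (hξ₂ : ξ₂ = ω + μ) (hξ₃ : ξ₃ = σ + μ + d)
    (f : ℝ → ℝ → ℝ)
    (hf_nonneg : ∀ S I : ℝ, 0 ≤ S → 0 ≤ I → 0 ≤ f S I)
    (hf_cont : ContinuousOn (fun p : ℝ × ℝ => f p.1 p.2) (Set.Ici 0 ×ˢ Set.Ici 0))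
    (hf_cd : ContDiffOn ℝ 1 (fun p : ℝ × ℝ => f p.1 p.2) (Set.Ioi 0 ×ˢ Set.Ioi 0))
    (hH1 : ∀ I : ℝ, 0 ≤ I → f 0 I = 0)
    (hH2 : ∀ S I : ℝ, 0 < S → 0 ≤ I → 0 < deriv (fun s => f s I) S)
    (hH3 : ∀ S I : ℝ, 0 ≤ S → 0 ≤ I → deriv (fun i => f S i) I ≤ 0)
    (S I C A : ℝ → ℝ)
    (hS : ContDiffOn ℝ 1 S (Set.Ici 0)) (hI : ContDiffOn ℝ 1 I (Set.Ici 0))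
    (hC : ContDiffOn ℝ 1 C (Set.Ici 0)) (hA : ContDiffOn ℝ 1 A (Set.Ici 0))
    (hSnn : ∀ t : ℝ, 0 ≤ t → 0 ≤ S t) (hInn : ∀ t : ℝ, 0 ≤ t → 0 ≤ I t)
    (hCnn : ∀ t : ℝ, 0 ≤ t → 0 ≤ C t) (hAnn : ∀ t : ℝ, 0 ≤ t → 0 ≤ A t)
    (hsys1 : ∀ t : ℝ, 0 < t →
      caputo α S t = Λ - μ * S t - f (S t) (I t) * I t)
    (hsys2 : ∀ t : ℝ, 0 < t →
      caputo α I t = f (S t) (I t) * I t - ξ₁ * I t + σ * A t + ω * C t)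
    (hsys3 : ∀ t : ℝ, 0 < t → caputo α C t = φ * I t - ξ₂ * C t)
    (hsys4 : ∀ t : ℝ, 0 < t → caputo α A t = ρ * I t - ξ₃ * A t) :
    (∀ t : ℝ, 0 < t →
        caputo α (fun τ => S τ + I τ + C τ + A τ) t
          ≤ Λ - μ * (S t + I t + C t + A t))
    ∧ (∀ t : ℝ, 0 ≤ t →
        S t + I t + C t + A t ≤ (S 0 + I 0 + C 0 + A 0) + Λ / μ) :=
  stmt_15_general α hα0 hα1 Λ μ ρ φ σ ω d ξ₁ ξ₂ ξ₃ hΛ hμ hd hξ₁ hξ₂ hξ₃ f S I C A hS hI hC hA hSnn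
    hInn hCnn hAnn hsys1 hsys2 hsys3 hsys4
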